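/- Let F be a 3-CNF formula with clauses indexed so that its literals form a family (X_i)_{i ∈ [m]}, where each X_i is either a variable or a negated variable, and the clauses are the triples (X_{3t-2}, X_{3t-1}, X_{3t}) for t ∈ [m/3]. Let P be the set of pairs {i,j} with i ≠ j and X_i = X_j (same literal), let J be a set of pairs {i,j} such that one of X_i, X_j is a variable and the other is its negation, with one such pair chosen for every variable that occurs both positively and negatively in F, and let K = {(3t-2, 3t-1, 3t) : t ∈ [m/3]}. Then F is satisfiable if and only if EQ(P) ∩ NEQ(J) ∩ OR(K) is nonempty, provided P additionally contains all pairs {i,j} with X_i = X_j and J is large enough to contain, for each variable occurring in both polarities, some pair witnessing the two polarities. More precisely: F is satisfiable iff there exists f : [m] → {0,1} such that f(i) = f(j) whenever X_i = X_j, f(i) ≠ f(j) whenever X_i = ¬X_j, and f(3t-2) ∨ f(3t-1) ∨ f(3t) = 1 for all t ∈ [m/3]. -/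

import Mathlib

/-!
A satisfying assignment labels each literal position by the truth value of its literal.
Conversely, given a labelling `f`, set a variable true exactly when one of its positive
occurrences is labelled true. A negative occurrence labelled true then sees its variable
false, since otherwise the complementary pair it forms with that positive occurrence would
carry two true labels. So every position labelled true holds a true literal, and the
clause condition on `f` transfers to the assignment.
-/

namespace CNF

variable {V ι : Type*}

/-- `(v, true)` is the positive and `(v, false)` the negative literal of `v`. -/
def litEval (α : V → Bool) (l : V × Bool) : Bool := α l.1 == l.2

theorem litEval_eq_true {α : V → Bool} {l : V × Bool} : litEval α l = true ↔ α l.1 = l.2 := by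
  simp [litEval]

theorem litEval_ne_of_complementary (α : V → Bool) {l l' : V × Bool} (hv : l.1 = l'.1)
    (hb : l.2 = !l'.2) : litEval α l ≠ litEval α l' := by
  obtain ⟨v, b⟩ := l
  obtain ⟨v', b'⟩ := l'
  obtain rfl : v = v' := hv
  obtain rfl : b = !b' := hb
  cases α v <;> cases b' <;> simp [litEval]

theorem exists_assignment_of_complementary_ne (X : ι → V × Bool) (f : ι → Bool)
    (hf : ∀ i j, (X i).1 = (X j).1 → (X i).2 = !(X j).2 → f i ≠ f j) :
    ∃ α : V → Bool, ∀ i, f i = true → α (X i).1 = (X i).2 := by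
  classical
  refine ⟨fun v => decide (∃ j, X j = (v, true) ∧ f j = true), fun i hi => ?_⟩
  rcases hXi : X i with ⟨v, _ | _⟩
  · simp only [decide_eq_false_iff_not, not_exists, not_and]
    intro j hXj hfj
    exact hf i j (by simp [hXi, hXj]) (by simp [hXi, hXj]) (hi.trans hfj.symm)
  · simpa using ⟨i, hXi, hi⟩

end CNF

open CNF in
/-- A 3-CNF formula, given by a family of clauses `X t` each consisting of
three literals `X t 0, X t 1, X t 2` (a literal being a variable paired with a polarity),
is satisfiable iff there is a truth allocation `f` on the literal positions that agrees
on equal literals, disagrees on complementary literals, and makes some literal of each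
clause true. -/
theorem stmt5 {V : Type*} (n : ℕ) (X : Fin n → Fin 3 → V × Bool) :
    (∃ α : V → Bool, ∀ t : Fin n, ∃ s : Fin 3, α (X t s).1 = (X t s).2) ↔
      (∃ f : Fin n → Fin 3 → Bool,
        (∀ t s t' s', X t s = X t' s' → f t s = f t' s') ∧
        (∀ t s t' s', (X t s).1 = (X t' s').1 → (X t s).2 = !(X t' s').2 →
          f t s ≠ f t' s') ∧
        (∀ t : Fin n, f t 0 = true ∨ f t 1 = true ∨ f t 2 = true)) := by
  constructor
  · rintro ⟨α, hα⟩
    refine ⟨fun t s => litEval α (X t s), fun t s t' s' h => by simp only [h],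
      fun t s t' s' => litEval_ne_of_complementary α, fun t => ?_⟩
    obtain ⟨s, hs⟩ := hα t
    have hs := litEval_eq_true.mpr hs
    fin_cases s <;> simp_all
  · rintro ⟨f, -, hne, hclause⟩
    obtain ⟨α, hα⟩ := exists_assignment_of_complementary_ne (fun p : Fin n × Fin 3 => X p.1 p.2)
      (fun p => f p.1 p.2) (fun p q => hne p.1 p.2 q.1 q.2)
    refine ⟨α, fun t => ?_⟩
    rcases hclause t with h | h | h
    exacts [⟨0, hα (t, 0) h⟩, ⟨1, hα (t, 1) h⟩, ⟨2, hα (t, 2) h⟩]
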